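/- If (M^n, g, f) is a nontrivial complete locally conformally flat gradient Yamabe soliton (W = 0) and f has no critical point, then the fibers of the warped product structure (ℝ, dr²) ×_{|∇f|} (N^{n−1}, ḡ) have constant sectional curvature. -/

import Mathlib

open scoped BigOperators

noncomputable section

/-- Kronecker delta. -/
def kd {m : ℕ} (a b : Fin m) : ℝ := if a = b then 1 else 0

/-- The metric of the warped product `(ℝ, dr²) ×_φ (N^n, ḡ)` at a point, in coordinates
`(r, θ)` where the `θ`'s are `ḡ`-orthonormal coordinates on the fiber `N` at the point:
`g = diag(1, φ², …, φ²)`.  Index `0` is the radial direction `∂_r`. -/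
def warpMetric {n : ℕ} (φ : ℝ) (i j : Fin (n + 1)) : ℝ :=
  if i = j then (if i = 0 then 1 else φ ^ 2) else 0

/-- Its inverse metric. -/
def warpMetricInv {n : ℕ} (φ : ℝ) (i j : Fin (n + 1)) : ℝ :=
  if i = j then (if i = 0 then 1 else 1 / φ ^ 2) else 0

/-!
The radial components `W(∂r, e_a, ∂r, e_c) = 0` of the Weyl tensor express the fiber block of
the Ricci tensor through `R(∂r, e_a, ∂r, e_c) = -φ''φ δ_ac`, `Ric(∂r, ∂r)` and the scalar
curvature, so that block is a multiple of `δ_ac`. Substituted into the fiber components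
`W(e_a, e_b, e_c, e_d) = 0`, this leaves `R̄_abcd` a multiple of `δ_ac δ_bd - δ_ad δ_bc`.
-/

def weylTensor {ι : Type*} (dim : ℝ) (g Ric : ι → ι → ℝ) (S : ℝ)
    (R : ι → ι → ι → ι → ℝ) (i j k l : ι) : ℝ :=
  R i j k l
    - (1 / (dim - 2)) * (Ric i k * g j l + Ric j l * g i k - Ric i l * g j k - Ric j k * g i l)
    + (S / ((dim - 1) * (dim - 2))) * (g j l * g i k - g i l * g j k)

def ricci {ι : Type*} [Fintype ι] (ginv : ι → ι → ℝ) (R : ι → ι → ι → ι → ℝ) (i k : ι) :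
    ℝ :=
  ∑ j, ∑ l, ginv j l * R i j k l

def scalarCurvature {ι : Type*} [Fintype ι] (ginv : ι → ι → ℝ) (R : ι → ι → ι → ι → ℝ) :
    ℝ :=
  ∑ i, ∑ k, ginv i k * ricci ginv R i k

section WarpedProduct

variable {n : ℕ} {φ : ℝ}

@[simp] lemma warpMetric_zero_zero : warpMetric (n := n) φ 0 0 = 1 := by simp [warpMetric]

@[simp] lemma warpMetric_zero_succ (a : Fin n) : warpMetric φ 0 a.succ = 0 := by
  simp [warpMetric, (Fin.succ_ne_zero a).symm]

@[simp] lemma warpMetric_succ_zero (a : Fin n) : warpMetric φ a.succ 0 = 0 := by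
  simp [warpMetric, Fin.succ_ne_zero a]

@[simp] lemma warpMetric_succ_succ (a c : Fin n) :
    warpMetric φ a.succ c.succ = φ ^ 2 * kd a c := by
  by_cases h : a = c <;> simp [warpMetric, kd, h]

variable {dim φ' φ'' S : ℝ} {Ric : Fin (n + 1) → Fin (n + 1) → ℝ}
  {RM : Fin (n + 1) → Fin (n + 1) → Fin (n + 1) → Fin (n + 1) → ℝ}

-- `Ric / (dim - 2)` is the combination occurring in the Weyl tensor; isolating it avoids
-- dividing by `dim - 2`.
lemma ricci_succ_succ_div_of_weylTensor_radial_eq_zero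
    (hrad : ∀ a b : Fin n, RM 0 a.succ 0 b.succ = - φ'' * φ * kd a b)
    (hW : ∀ a c : Fin n, weylTensor dim (warpMetric φ) Ric S RM 0 a.succ 0 c.succ = 0)
    (a c : Fin n) :
    Ric a.succ c.succ / (dim - 2)
      = (- φ'' * φ - Ric 0 0 * φ ^ 2 / (dim - 2) + S * φ ^ 2 / ((dim - 1) * (dim - 2)))
        * kd a c := by
  have h := hW a c
  simp only [weylTensor, warpMetric_zero_zero, warpMetric_zero_succ, warpMetric_succ_zero,
    warpMetric_succ_succ, hrad] at h
  linear_combination -h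

lemma fiber_curvature_eq_of_weylTensor_fiber_eq_zero {ρ : ℝ}
    {Rb : Fin n → Fin n → Fin n → Fin n → ℝ} (hφ : φ ≠ 0)
    (hfib : ∀ a b c d : Fin n, RM a.succ b.succ c.succ d.succ =
      φ ^ 2 * Rb a b c d - φ' ^ 2 * φ ^ 2 * (kd a c * kd b d - kd a d * kd b c))
    (hRic : ∀ a c : Fin n, Ric a.succ c.succ / (dim - 2) = ρ * kd a c)
    (hW : ∀ a b c d : Fin n,
      weylTensor dim (warpMetric φ) Ric S RM a.succ b.succ c.succ d.succ = 0)
    (a b c d : Fin n) :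
    Rb a b c d = (φ' ^ 2 + 2 * ρ - S * φ ^ 2 / ((dim - 1) * (dim - 2)))
      * (kd a c * kd b d - kd a d * kd b c) := by
  have h := hW a b c d
  simp only [weylTensor, warpMetric_succ_succ, hfib] at h
  refine mul_left_cancel₀ (pow_ne_zero 2 hφ) ?_
  linear_combination h + φ ^ 2 * (kd b d * hRic a c + kd a c * hRic b d
    - kd b c * hRic a d - kd a d * hRic b c)

end WarpedProduct

theorem lcf_warped_product_fiber_constant_curvature_general
    (n : ℕ)
    (Rb : Fin n → Fin n → Fin n → Fin n → ℝ)
    (φ φ' φ'' : ℝ) (hφ : 0 < φ)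
    (RM : Fin (n + 1) → Fin (n + 1) → Fin (n + 1) → Fin (n + 1) → ℝ)
    (hrad : ∀ a b : Fin n, RM 0 a.succ 0 b.succ = - φ'' * φ * kd a b)
    (hfib : ∀ a b c d : Fin n, RM a.succ b.succ c.succ d.succ =
      φ ^ 2 * Rb a b c d - φ' ^ 2 * φ ^ 2 * (kd a c * kd b d - kd a d * kd b c))
    -- local conformal flatness: the Weyl tensor of the warped metric vanishes
    (hlcf : let g := warpMetric (n := n) φ; let ginv := warpMetricInv (n := n) φ;
      let Ric := fun i k => ∑ j, ∑ l, ginv j l * RM i j k l;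
      let S := ∑ i, ∑ k, ginv i k * Ric i k;
      ∀ i j k l : Fin (n + 1),
        RM i j k l
          - (1 / (((n : ℝ) + 1) - 2)) *
              (Ric i k * g j l + Ric j l * g i k - Ric i l * g j k - Ric j k * g i l)
          + (S / ((((n : ℝ) + 1) - 1) * (((n : ℝ) + 1) - 2))) *
              (g j l * g i k - g i l * g j k) = 0) :
    ∃ κ : ℝ, ∀ a b c d : Fin n,
      Rb a b c d = κ * (kd a c * kd b d - kd a d * kd b c) := by
  have hW : ∀ i j k l, weylTensor ((n : ℝ) + 1) (warpMetric φ) (ricci (warpMetricInv φ) RM)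
      (scalarCurvature (warpMetricInv φ) RM) RM i j k l = 0 := hlcf
  have hRic := ricci_succ_succ_div_of_weylTensor_radial_eq_zero hrad
    fun a c => hW 0 a.succ 0 c.succ
  exact ⟨_, fiber_curvature_eq_of_weylTensor_fiber_eq_zero hφ.ne' hfib hRic
    fun a b c d => hW a.succ b.succ c.succ d.succ⟩

/-- Pointwise model of: if a nontrivial complete locally conformally flat gradient
Yamabe soliton has a potential with no critical points, so that (by Cao–Sun–Zhang) it
is the warped product `(ℝ, dr²) ×_{|∇f|} (N^{n-1}, ḡ)`, then the fibers have constant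
sectional curvature.  The total manifold has dimension `n + 1 ≥ 4`; `Rb` is the
curvature tensor of the fiber at a point (in `ḡ`-orthonormal coordinates), `RM` the
curvature tensor of the warped metric `g = dr² + φ²ḡ` (with `φ = |∇f| > 0`), whose
components are prescribed by the standard warped product curvature formulas, and local
conformal flatness says the Weyl tensor of `g` vanishes.  Conclusion: the fiber
curvature has the constant sectional curvature form. -/
theorem lcf_warped_product_fiber_constant_curvature
    (n : ℕ) (hn : 3 ≤ n)
    (Rb : Fin n → Fin n → Fin n → Fin n → ℝ)
    (hbskew₁ : ∀ a b c d, Rb a b c d = - Rb b a c d)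
    (hbskew₂ : ∀ a b c d, Rb a b c d = - Rb a b d c)
    (hbpair : ∀ a b c d, Rb a b c d = Rb c d a b)
    (hbbianchi : ∀ a b c d, Rb a b c d + Rb b c a d + Rb c a b d = 0)
    (φ φ' φ'' : ℝ) (hφ : 0 < φ)
    (RM : Fin (n + 1) → Fin (n + 1) → Fin (n + 1) → Fin (n + 1) → ℝ)
    (hskew₁ : ∀ i j k l, RM i j k l = - RM j i k l)
    (hskew₂ : ∀ i j k l, RM i j k l = - RM i j l k)
    (hpair : ∀ i j k l, RM i j k l = RM k l i j)
    (hrad : ∀ a b : Fin n, RM 0 a.succ 0 b.succ = - φ'' * φ * kd a b)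
    (hfib : ∀ a b c d : Fin n, RM a.succ b.succ c.succ d.succ =
      φ ^ 2 * Rb a b c d - φ' ^ 2 * φ ^ 2 * (kd a c * kd b d - kd a d * kd b c))
    (hmix : ∀ a b c : Fin n, RM 0 a.succ b.succ c.succ = 0)
    -- local conformal flatness: the Weyl tensor of the warped metric vanishes
    (hlcf : let g := warpMetric (n := n) φ; let ginv := warpMetricInv (n := n) φ;
      let Ric := fun i k => ∑ j, ∑ l, ginv j l * RM i j k l;
      let S := ∑ i, ∑ k, ginv i k * Ric i k;
      ∀ i j k l : Fin (n + 1),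
        RM i j k l
          - (1 / (((n : ℝ) + 1) - 2)) *
              (Ric i k * g j l + Ric j l * g i k - Ric i l * g j k - Ric j k * g i l)
          + (S / ((((n : ℝ) + 1) - 1) * (((n : ℝ) + 1) - 2))) *
              (g j l * g i k - g i l * g j k) = 0) :
    ∃ κ : ℝ, ∀ a b c d : Fin n,
      Rb a b c d = κ * (kd a c * kd b d - kd a d * kd b c) :=
  lcf_warped_product_fiber_constant_curvature_general n Rb φ φ' φ'' hφ RM hrad hfib hlcf
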